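/- Decorrelation of the chain coordinate. Assume ψ_U(n) → 0 and the random Doeblin condition; let ρ ∈ (0,1), (μ_ω) and (K_p)_{p≥1} be as in the effective random geometric ergodicity theorem. Let f, g : 𝒴 × X → ℝ be measurable with F_ω := ess sup_{μ_ω} |f(ω_0,·)| and G_ω := ess sup_{μ_ω} |g(ω_0,·)| in L^q(ℙ) for some q > 2. Then there exist C > 0 and ρ_1 ∈ (0,1) such that for every n ∈ ℕ, | ∫_Ω ∫_X f(ω_0,x) · (R_{ω,n} g(ω_n,·))(x) dμ_ω(x) dℙ(ω) − ∫_Ω μ_ω(f(ω_0,·)) · μ_{θ^n ω}(g(ω_n,·)) dℙ(ω) | ≤ C ρ_1^n ‖F‖_{L^q(ℙ)} ‖G‖_{L^q(ℙ)}. -/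

import Mathlib

open MeasureTheory ProbabilityTheory Filter

noncomputable section

variable {𝒴 X : Type*} [MeasurableSpace 𝒴] [MeasurableSpace X]

/-- The left shift `θ` on `Ω = 𝒴^ℤ`. -/
def shift (ω : ℤ → 𝒴) : ℤ → 𝒴 := fun n => ω (n + 1)

/-- `θ^{-n} ω`. -/
def shiftBack (n : ℕ) (ω : ℤ → 𝒴) : ℤ → 𝒴 := fun s => ω (s - n)

/-- The σ-algebra `F_S` generated by the coordinate maps `ω ↦ ω s`, `s ∈ S`. -/
def coordSigma (𝒴 : Type*) [m𝒴 : MeasurableSpace 𝒴] (S : Set ℤ) :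
    MeasurableSpace (ℤ → 𝒴) :=
  ⨆ s ∈ S, m𝒴.comap fun ω => ω s

/-- The upper ψ-mixing coefficients `ψ_U(n)`. -/
def psiU (P : Measure (ℤ → 𝒴)) (n : ℕ) : ℝ :=
  sSup { r : ℝ | ∃ k : ℤ, ∃ A B : Set (ℤ → 𝒴),
    MeasurableSet[coordSigma 𝒴 {s | s ≤ k}] A ∧
    MeasurableSet[coordSigma 𝒴 {s | k + n ≤ s}] B ∧
    0 < (P A).toReal * (P B).toReal ∧
    r = (P (A ∩ B)).toReal / ((P A).toReal * (P B).toReal) - 1 }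

/-- The `n`-step kernel composition `R_{ω,n} = R_{ω_0} ∘ R_{ω_1} ∘ ⋯ ∘ R_{ω_{n-1}}`. -/
def Rcomp (R : 𝒴 → Kernel X X) : ℕ → (ℤ → 𝒴) → Kernel X X
  | 0, _ => Kernel.id
  | n + 1, ω => (Rcomp R n (shift ω)) ∘ₖ R (ω 0)

/-- `‖κ − μ‖_∞`: the supremum over measurable `g` with `sup|g| ≤ 1` and over `x`
of `|κ g (x) − μ(g)|`. -/
def opDist (κ : Kernel X X) (μ : Measure X) : ℝ :=
  sSup { r : ℝ | ∃ g : X → ℝ, Measurable g ∧ (∀ x, |g x| ≤ 1) ∧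
    ∃ x : X, r = |(∫ y, g y ∂(κ x)) - ∫ y, g y ∂μ| }

/-- The random Doeblin condition: ℙ-a.s.,
`R_{θ^{-n_ω}ω, n_ω}(x, Γ) ≥ γ_ω m_ω(Γ)` for all `x` and all measurable `Γ`. -/
def Doeblin (P : Measure (ℤ → 𝒴)) (R : 𝒴 → Kernel X X)
    (nD : (ℤ → 𝒴) → ℕ) (γ : (ℤ → 𝒴) → ℝ) (m : (ℤ → 𝒴) → Measure X) : Prop :=
  ∀ᵐ ω ∂P, ∀ x : X, ∀ Γ : Set X, MeasurableSet Γ →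
    ENNReal.ofReal (γ ω) * m ω Γ ≤ Rcomp R (nD ω) (shiftBack (nD ω) ω) x Γ

/-- Equivariance `(R_ω)^* μ_ω = μ_{θ ω}`, ℙ-a.s. -/
def Equivariant (P : Measure (ℤ → 𝒴)) (R : 𝒴 → Kernel X X)
    (μ : (ℤ → 𝒴) → Measure X) : Prop :=
  ∀ᵐ ω ∂P, ∀ Γ : Set X, MeasurableSet Γ →
    μ (shift ω) Γ = ∫⁻ x, R (ω 0) x Γ ∂(μ ω)

/-- The effective geometric ergodicity rates for a given random variable `K` and
exponent `p`: ℙ-a.s., for all `n`,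
`max(‖R_{θ^{-n}ω,n} − μ_ω‖_∞, ‖R_{ω,n} − μ_{θ^n ω}‖_∞) ≤ K(ω) ρ^{n/p}`. -/
def RateFor (P : Measure (ℤ → 𝒴)) (R : 𝒴 → Kernel X X)
    (μ : (ℤ → 𝒴) → Measure X) (ρ p : ℝ) (K : (ℤ → 𝒴) → ℝ) : Prop :=
  ∀ᵐ ω ∂P, ∀ n : ℕ,
    max (opDist (Rcomp R n (shiftBack n ω)) (μ ω))
        (opDist (Rcomp R n ω) (μ (shift^[n] ω))) ≤ K ω * ρ ^ ((n : ℝ) / p)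

/-- Effective rates: for every finite `p ≥ 1` there is `K_p ∈ L^p(ℙ)`
realizing the exponential rates with exponent `ρ^{n/p}`. -/
def EffectiveRates (P : Measure (ℤ → 𝒴)) (R : 𝒴 → Kernel X X)
    (μ : (ℤ → 𝒴) → Measure X) (ρ : ℝ) : Prop :=
  ∀ p : ℝ, 1 ≤ p → ∃ K : (ℤ → 𝒴) → ℝ,
    MemLp K (ENNReal.ofReal p) P ∧ RateFor P R μ ρ p K

/-! Equivariance gives `μ_{θⁿω} = μ_ω R_{ω,n}`, so the fibrewise covariance is
`∫ f(ω₀,·) (R_{ω,n} g(ω_n,·) − μ_{θⁿω}(g(ω_n,·))) dμ_ω`, which is at most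
`F_ω G_{θⁿω} ‖R_{ω,n} − μ_{θⁿω}‖_∞ ≤ F_ω G_{θⁿω} K_p(ω) ρ^{n/p}`. Integrating over `ℙ` with
Hölder's inequality for the exponents `q, q, p = q/(q−2)` and the `θ`-invariance of `ℙ` gives
the claim with `ρ₁ = ρ^{1/p}` and `C = ‖K_p‖_p + 1`. -/

open scoped ENNReal

section General

variable {α : Type*} [MeasurableSpace α] {μ : Measure α}

theorem nonneg_of_ae_abs_le [NeZero μ] {u : α → ℝ} {c : ℝ} (h : ∀ᵐ x ∂μ, |u x| ≤ c) :
    0 ≤ c :=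
  h.exists.elim fun _ hx => (abs_nonneg _).trans hx

theorem abs_integral_le_of_ae_abs_le [IsProbabilityMeasure μ] {u : α → ℝ} {c : ℝ}
    (h : ∀ᵐ x ∂μ, |u x| ≤ c) : |∫ x, u x ∂μ| ≤ c := by
  simpa using
    norm_integral_le_of_norm_le_const (h.mono fun _ hx => (Real.norm_eq_abs _).trans_le hx)

theorem MeasureTheory.StronglyMeasurable.integral_prod_right_of_measurable {β E : Type*}
    [MeasurableSpace β] [NormedAddCommGroup E] [NormedSpace ℝ E] {ν : α → Measure β}
    (hν : Measurable ν) [∀ a, IsProbabilityMeasure (ν a)] {f : α × β → E}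
    (hf : StronglyMeasurable f) :
    StronglyMeasurable fun a => ∫ b, f (a, b) ∂ν a :=
  have : IsMarkovKernel (⟨ν, hν⟩ : Kernel α β) := ⟨‹_›⟩
  hf.integral_kernel_prod_right' (κ := ⟨ν, hν⟩)

theorem integral_abs_mul_mul_le {p q r s : ℝ≥0∞} [ENNReal.HolderTriple p q s]
    [ENNReal.HolderConjugate s r] {f g h : α → ℝ} (hf : MemLp f p μ) (hg : MemLp g q μ)
    (hh : MemLp h r μ) :
    ∫ x, |f x * g x * h x| ∂μ ≤
      (eLpNorm f p μ).toReal * (eLpNorm g q μ).toReal * (eLpNorm h r μ).toReal := by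
  have hfgh : eLpNorm ((f • g) • h) 1 μ ≤ eLpNorm f p μ * eLpNorm g q μ * eLpNorm h r μ :=
    (eLpNorm_smul_le_mul_eLpNorm (p := s) hh.1 (hf.1.smul hg.1)).trans
      (by gcongr; exact eLpNorm_smul_le_mul_eLpNorm hg.1 hf.1)
  have hint : ∫ x, |f x * g x * h x| ∂μ = (eLpNorm ((f • g) • h) 1 μ).toReal := by
    rw [eLpNorm_one_eq_lintegral_enorm,
      ← integral_norm_eq_lintegral_enorm ((hf.1.smul hg.1).smul hh.1)]
    simp [Real.norm_eq_abs]
  rw [hint, ← ENNReal.toReal_mul, ← ENNReal.toReal_mul]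
  exact ENNReal.toReal_mono (by finiteness) hfgh

theorem abs_integral_sub_integral_le_of_abs_sub_le [IsProbabilityMeasure μ] {p q r s : ℝ≥0∞}
    [ENNReal.HolderTriple p q s] [ENNReal.HolderConjugate s r] {u v F G K : α → ℝ} {c : ℝ}
    (hc : 0 ≤ c) (hu : AEStronglyMeasurable u μ) (hv : AEStronglyMeasurable v μ)
    (hF : MemLp F p μ) (hG : MemLp G q μ) (hK : MemLp K r μ)
    (huFG : ∀ᵐ x ∂μ, |u x| ≤ F x * G x) (hvFG : ∀ᵐ x ∂μ, |v x| ≤ F x * G x)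
    (huv : ∀ᵐ x ∂μ, |u x - v x| ≤ c * |F x * G x * K x|) :
    |∫ x, u x ∂μ - ∫ x, v x ∂μ| ≤
      c * ((eLpNorm F p μ).toReal * (eLpNorm G q μ).toReal * (eLpNorm K r μ).toReal) := by
  have hFG : Integrable (fun x => F x * G x) μ :=
    (hG.mul' (r := s) hF).integrable (ENNReal.HolderConjugate.one_le s r)
  have hFGK : Integrable (fun x => |F x * G x * K x|) μ :=
    ((hK.mul' (r := 1) (hG.mul' (r := s) hF)).integrable le_rfl).abs
  rw [← integral_sub (hFG.mono' hu huFG) (hFG.mono' hv hvFG)]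
  calc |∫ x, (u x - v x) ∂μ| ≤ ∫ x, c * |F x * G x * K x| ∂μ :=
        norm_integral_le_of_norm_le (f := fun x => u x - v x) (hFGK.const_mul c) huv
    _ = c * ∫ x, |F x * G x * K x| ∂μ := integral_const_mul c _
    _ ≤ _ := by gcongr; exact integral_abs_mul_mul_le (s := s) hF hG hK

end General

theorem holderTriple_ofReal_half {q : ℝ} (hq : 0 < q) :
    ENNReal.HolderTriple (.ofReal q) (.ofReal q) (.ofReal (q / 2)) :=
  Real.HolderTriple.ennrealOfReal ⟨by ring, hq, hq⟩

theorem holderConjugate_ofReal_half {q : ℝ} (hq : 2 < q) :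
    ENNReal.HolderConjugate (.ofReal (q / 2)) (.ofReal (q / (q - 2))) := by
  have hq2 : 0 < q - 2 := by linarith
  simpa using Real.HolderTriple.ennrealOfReal (r := 1)
    ⟨by field_simp; ring, by positivity, by positivity⟩

section Fiber

variable {κ : Kernel X X} [IsMarkovKernel κ]

theorem le_opDist {ν : Measure X} [IsProbabilityMeasure ν] {g : X → ℝ} (hg : Measurable g)
    (hg1 : ∀ y, |g y| ≤ 1) (x : X) : |∫ y, g y ∂κ x - ∫ y, g y ∂ν| ≤ opDist κ ν := by
  refine le_csSup ⟨2, ?_⟩ ⟨g, hg, hg1, x, rfl⟩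
  rintro _ ⟨g', -, hg', x', rfl⟩
  have hκ := abs_integral_le_of_ae_abs_le (μ := κ x') (ae_of_all _ hg')
  have hν := abs_integral_le_of_ae_abs_le (μ := ν) (ae_of_all _ hg')
  linarith [abs_sub (∫ y, g' y ∂κ x') (∫ y, g' y ∂ν)]

theorem abs_integral_sub_integral_le_mul_opDist {ν : Measure X} [IsProbabilityMeasure ν]
    {g : X → ℝ} {b : ℝ} (hg : Measurable g) (hgb : ∀ y, |g y| ≤ b) (x : X) :
    |∫ y, g y ∂κ x - ∫ y, g y ∂ν| ≤ b * opDist κ ν := by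
  rcases ((abs_nonneg _).trans (hgb x)).eq_or_lt with rfl | hb
  · simp [funext fun y => abs_nonpos_iff.1 (hgb y)]
  · have hg1 : ∀ y, |g y / b| ≤ 1 := fun y => by
      rw [abs_div, abs_of_pos hb]; exact div_le_one_of_le₀ (hgb y) hb.le
    have := le_opDist (κ := κ) (ν := ν) (hg.div_const b) hg1 x
    rwa [integral_div, integral_div, ← sub_div, abs_div, abs_of_pos hb, div_le_iff₀' hb] at this

theorem ae_abs_integral_le_of_ae_bind {μ₀ : Measure X} {g : X → ℝ} {b : ℝ}
    (hgb : ∀ᵐ y ∂μ₀.bind κ, |g y| ≤ b) : ∀ᵐ x ∂μ₀, |∫ y, g y ∂κ x| ≤ b :=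
  (Measure.ae_ae_of_ae_comp hgb).mono fun _ => abs_integral_le_of_ae_abs_le

theorem ae_abs_mul_integral_le {μ₀ : Measure X} {f g : X → ℝ} {a b : ℝ}
    (hfa : ∀ᵐ x ∂μ₀, |f x| ≤ a) (hgb : ∀ᵐ y ∂μ₀.bind κ, |g y| ≤ b) :
    ∀ᵐ x ∂μ₀, |f x * ∫ y, g y ∂κ x| ≤ a * b := by
  filter_upwards [hfa, ae_abs_integral_le_of_ae_bind hgb] with x hf hg
  rw [abs_mul]
  exact mul_le_mul hf hg (abs_nonneg _) ((abs_nonneg _).trans hf)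

variable {μ₀ : Measure X} [IsProbabilityMeasure μ₀]

theorem ae_abs_integral_sub_integral_bind_le {g : X → ℝ} {b : ℝ} (hg : Measurable g)
    (hgb : ∀ᵐ y ∂μ₀.bind κ, |g y| ≤ b) :
    ∀ᵐ x ∂μ₀, |∫ y, g y ∂κ x - ∫ y, g y ∂μ₀.bind κ| ≤ b * opDist κ (μ₀.bind κ) := by
  have hb : 0 ≤ b := nonneg_of_ae_abs_le hgb
  -- cut `g` off where it exceeds its essential bound, so that `le_opDist` applies
  set S := {y | |g y| ≤ b}
  have hg'_eq : g =ᵐ[μ₀.bind κ] S.indicator g :=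
    hgb.mono fun y hy => (Set.indicator_of_mem (s := S) hy g).symm
  have hg'_le : ∀ y, |S.indicator g y| ≤ b := fun y => by
    simp only [S, Set.indicator_apply]
    split_ifs with hy
    exacts [hy, by simpa using hb]
  filter_upwards [Measure.ae_ae_of_ae_comp hg'_eq] with x hx
  rw [integral_congr_ae hx, integral_congr_ae hg'_eq]
  exact abs_integral_sub_integral_le_mul_opDist
    (hg.indicator (measurableSet_le hg.abs measurable_const)) hg'_le x

theorem abs_integral_mul_integral_le {f g : X → ℝ} {a b : ℝ} (hfa : ∀ᵐ x ∂μ₀, |f x| ≤ a)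
    (hgb : ∀ᵐ y ∂μ₀.bind κ, |g y| ≤ b) : |∫ x, f x * ∫ y, g y ∂κ x ∂μ₀| ≤ a * b :=
  abs_integral_le_of_ae_abs_le (ae_abs_mul_integral_le hfa hgb)

theorem abs_integral_mul_integral_sub_le {f g : X → ℝ} {a b : ℝ} (hf : Measurable f)
    (hg : Measurable g) (hfa : ∀ᵐ x ∂μ₀, |f x| ≤ a) (hgb : ∀ᵐ y ∂μ₀.bind κ, |g y| ≤ b) :
    |∫ x, f x * ∫ y, g y ∂κ x ∂μ₀ - (∫ x, f x ∂μ₀) * ∫ y, g y ∂μ₀.bind κ| ≤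
      a * b * opDist κ (μ₀.bind κ) := by
  have hgκ : StronglyMeasurable fun x => ∫ y, g y ∂κ x :=
    (hg.comp measurable_snd).stronglyMeasurable.integral_kernel_prod_right'
  have hprod : Integrable (fun x => f x * ∫ y, g y ∂κ x) μ₀ :=
    (integrable_const (a * b)).mono' (hf.aestronglyMeasurable.mul hgκ.aestronglyMeasurable)
      (ae_abs_mul_integral_le hfa hgb)
  have hf_int : Integrable f μ₀ := (integrable_const a).mono' hf.aestronglyMeasurable hfa
  rw [← integral_mul_const, ← integral_sub hprod (hf_int.mul_const _)]
  refine abs_integral_le_of_ae_abs_le ?_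
  filter_upwards [hfa, ae_abs_integral_sub_integral_bind_le hg hgb] with x hf hg
  rw [← mul_sub, abs_mul, mul_assoc]
  exact mul_le_mul hf hg (abs_nonneg _) ((abs_nonneg _).trans hf)

end Fiber

section Chain

@[fun_prop]
theorem measurable_shift : Measurable (shift (𝒴 := 𝒴)) :=
  measurable_pi_lambda _ fun _ => measurable_pi_apply _

theorem shift_iterate_apply {Y : Type*} (n : ℕ) (ω : ℤ → Y) (s : ℤ) :
    shift^[n] ω s = ω (s + n) := by
  induction n generalizing ω with
  | zero => simp
  | succ n ih =>
    rw [Function.iterate_succ_apply, ih, shift]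
    push_cast
    ring_nf

theorem shift_iterate_apply_zero {Y : Type*} (n : ℕ) (ω : ℤ → Y) : shift^[n] ω 0 = ω n := by
  rw [shift_iterate_apply, zero_add]

theorem iterate_eq_bind_Rcomp {Y : Type*} {R : Y → Kernel X X} {μ : (ℤ → Y) → Measure X}
    {ω : ℤ → Y}
    (h : ∀ j, μ (shift (shift^[j] ω)) = (μ (shift^[j] ω)).bind (R (shift^[j] ω 0))) (n : ℕ) :
    μ (shift^[n] ω) = (μ ω).bind (Rcomp R n ω) := by
  induction n generalizing ω with
  | zero => exact Measure.bind_dirac.symm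
  | succ n ih =>
    have h0 : μ (shift ω) = (μ ω).bind (R (ω 0)) := by simpa using h 0
    rw [Function.iterate_succ_apply, ih fun j => by simpa using h (j + 1), h0, Measure.comp_assoc]
    rfl

variable {R : 𝒴 → Kernel X X} {μ : (ℤ → 𝒴) → Measure X}

theorem Equivariant.ae_shift_eq_bind {P : Measure (ℤ → 𝒴)} (h : Equivariant P R μ) :
    ∀ᵐ ω ∂P, μ (shift ω) = (μ ω).bind (R (ω 0)) :=
  h.mono fun _ hω => Measure.ext fun Γ hΓ => by
    rw [Measure.bind_apply hΓ (R _).measurable.aemeasurable, hω Γ hΓ]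

theorem Equivariant.ae_iterate_eq_bind {P : Measure (ℤ → 𝒴)} (h : Equivariant P R μ)
    (hP : MeasurePreserving shift P P) :
    ∀ᵐ ω ∂P, ∀ n, μ (shift^[n] ω) = (μ ω).bind (Rcomp R n ω) := by
  have horbit : ∀ᵐ ω ∂P, ∀ j, μ (shift (shift^[j] ω)) =
      (μ (shift^[j] ω)).bind (R (shift^[j] ω 0)) :=
    ae_all_iff.2 fun j => (hP.iterate j).quasiMeasurePreserving.ae h.ae_shift_eq_bind
  exact horbit.mono fun _ => iterate_eq_bind_Rcomp

variable [∀ y, IsMarkovKernel (R y)]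

instance isMarkovKernel_Rcomp (n : ℕ) (ω : ℤ → 𝒴) : IsMarkovKernel (Rcomp R n ω) := by
  induction n generalizing ω with
  | zero => rw [Rcomp]; infer_instance
  | succ n ih => rw [Rcomp]; infer_instance

theorem measurable_Rcomp (hR : Measurable fun a : 𝒴 × X => R a.1 a.2) (n : ℕ) :
    Measurable fun p : (ℤ → 𝒴) × X => Rcomp R n p.1 p.2 := by
  induction n with
  | zero =>
    simp only [Rcomp, Kernel.id_apply]
    exact Measure.measurable_dirac.comp measurable_snd
  | succ n ih =>
    let ξ : Kernel ((ℤ → 𝒴) × X) X :=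
      ⟨fun p => R (p.1 0) p.2, hR.comp (f := fun p : (ℤ → 𝒴) × X => (p.1 0, p.2)) (by fun_prop)⟩
    have : IsMarkovKernel ξ := ⟨fun p => inferInstanceAs (IsProbabilityMeasure (R _ _))⟩
    have ih' : Measurable fun q : ((ℤ → 𝒴) × X) × X => Rcomp R n (shift q.1.1) q.2 :=
      ih.comp (f := fun q : ((ℤ → 𝒴) × X) × X => (shift q.1.1, q.2)) (by fun_prop)
    refine Measure.measurable_of_measurable_coe _ fun Γ hΓ => ?_
    simp only [Rcomp, Kernel.comp_apply' _ _ _ hΓ]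
    exact ((Measure.measurable_coe hΓ).comp ih').lintegral_kernel_prod_right' (κ := ξ)

end Chain

section Correlation

variable {Y : Type*} {R : Y → Kernel X X} {μ : (ℤ → Y) → Measure X} {f g : Y × X → ℝ}

def correlation (R : Y → Kernel X X) (μ : (ℤ → Y) → Measure X) (f g : Y × X → ℝ) (n : ℕ)
    (ω : ℤ → Y) : ℝ :=
  ∫ x, f (ω 0, x) * ∫ y, g (ω (n : ℤ), y) ∂((Rcomp R n ω) x) ∂(μ ω)

def decoupledCorrelation (μ : (ℤ → Y) → Measure X) (f g : Y × X → ℝ) (n : ℕ)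
    (ω : ℤ → Y) : ℝ :=
  (∫ x, f (ω 0, x) ∂(μ ω)) * ∫ x, g (ω (n : ℤ), x) ∂(μ (shift^[n] ω))

variable [∀ ω, IsProbabilityMeasure (μ ω)] {ω : ℤ → Y} {n : ℕ} {a b : ℝ}

theorem abs_decoupledCorrelation_le (hfa : ∀ᵐ x ∂μ ω, |f (ω 0, x)| ≤ a)
    (hgb : ∀ᵐ x ∂μ (shift^[n] ω), |g (shift^[n] ω 0, x)| ≤ b) :
    |decoupledCorrelation μ f g n ω| ≤ a * b := by
  rw [shift_iterate_apply_zero] at hgb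
  rw [decoupledCorrelation, abs_mul]
  exact mul_le_mul (abs_integral_le_of_ae_abs_le hfa) (abs_integral_le_of_ae_abs_le hgb)
    (abs_nonneg _) (nonneg_of_ae_abs_le hfa)

theorem stronglyMeasurable_decoupledCorrelation [MeasurableSpace Y] (hμ : Measurable μ)
    (hf : Measurable f) (hg : Measurable g) (n : ℕ) :
    StronglyMeasurable (decoupledCorrelation μ f g n) := by
  have hμf := (hf.comp (f := fun p : (ℤ → Y) × X => (p.1 0, p.2)) (by fun_prop)
    ).stronglyMeasurable.integral_prod_right_of_measurable hμ
  have hμg := (hg.comp (f := fun p : (ℤ → Y) × X => (p.1 0, p.2)) (by fun_prop)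
    ).stronglyMeasurable.integral_prod_right_of_measurable hμ
  have hshift : Measurable (shift^[n] : (ℤ → Y) → ℤ → Y) := measurable_shift.iterate n
  convert hμf.mul (hμg.comp_measurable hshift) using 1
  funext ω
  simp [decoupledCorrelation, shift_iterate_apply_zero]

variable [∀ y, IsMarkovKernel (R y)]

theorem abs_correlation_le (hω : μ (shift^[n] ω) = (μ ω).bind (Rcomp R n ω))
    (hfa : ∀ᵐ x ∂μ ω, |f (ω 0, x)| ≤ a)
    (hgb : ∀ᵐ x ∂μ (shift^[n] ω), |g (shift^[n] ω 0, x)| ≤ b) :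
    |correlation R μ f g n ω| ≤ a * b := by
  rw [shift_iterate_apply_zero, hω] at hgb
  exact abs_integral_mul_integral_le hfa hgb

variable [MeasurableSpace Y]

theorem abs_correlation_sub_decoupledCorrelation_le (hf : Measurable f) (hg : Measurable g)
    (hω : μ (shift^[n] ω) = (μ ω).bind (Rcomp R n ω)) (hfa : ∀ᵐ x ∂μ ω, |f (ω 0, x)| ≤ a)
    (hgb : ∀ᵐ x ∂μ (shift^[n] ω), |g (shift^[n] ω 0, x)| ≤ b) :
    |correlation R μ f g n ω - decoupledCorrelation μ f g n ω| ≤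
      a * b * opDist (Rcomp R n ω) (μ (shift^[n] ω)) := by
  rw [shift_iterate_apply_zero, hω] at hgb
  rw [correlation, decoupledCorrelation, hω]
  exact abs_integral_mul_integral_sub_le (hf.comp measurable_prodMk_left)
    (hg.comp measurable_prodMk_left) hfa hgb

theorem stronglyMeasurable_correlation (hR : Measurable fun a : Y × X => R a.1 a.2)
    (hμ : Measurable μ) (hf : Measurable f) (hg : Measurable g) (n : ℕ) :
    StronglyMeasurable (correlation R μ f g n) := by
  have hRg : StronglyMeasurable fun p : (ℤ → Y) × X => ∫ y, g (p.1 n, y) ∂(Rcomp R n p.1 p.2) :=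
    (hg.comp (f := fun q : ((ℤ → Y) × X) × X => (q.1.1 n, q.2)) (by fun_prop)
      ).stronglyMeasurable.integral_prod_right_of_measurable (measurable_Rcomp hR n)
  exact ((hf.comp (f := fun p : (ℤ → Y) × X => (p.1 0, p.2)) (by fun_prop)
    ).stronglyMeasurable.mul hRg).integral_prod_right_of_measurable hμ

end Correlation

theorem RateFor.ae_abs_correlation_sub_decoupledCorrelation_le {P : Measure (ℤ → 𝒴)}
    {R : 𝒴 → Kernel X X} [∀ y, IsMarkovKernel (R y)] {μ : (ℤ → 𝒴) → Measure X}
    [∀ ω, IsProbabilityMeasure (μ ω)] {ρ p : ℝ} {K : (ℤ → 𝒴) → ℝ} (hK : RateFor P R μ ρ p K)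
    (hρ : 0 ≤ ρ) (hbind : ∀ᵐ ω ∂P, ∀ n, μ (shift^[n] ω) = (μ ω).bind (Rcomp R n ω))
    {f g : 𝒴 × X → ℝ} (hf : Measurable f) (hg : Measurable g) {F G : (ℤ → 𝒴) → ℝ}
    (hF : ∀ ω, ∀ᵐ x ∂μ ω, |f (ω 0, x)| ≤ F ω) (hG : ∀ ω, ∀ᵐ x ∂μ ω, |g (ω 0, x)| ≤ G ω)
    (n : ℕ) :
    ∀ᵐ ω ∂P, |correlation R μ f g n ω - decoupledCorrelation μ f g n ω| ≤
      ρ ^ ((n : ℝ) / p) * |F ω * G (shift^[n] ω) * K ω| := by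
  filter_upwards [hbind, hK] with ω hω hKω
  have hFG : 0 ≤ F ω * G (shift^[n] ω) :=
    mul_nonneg (nonneg_of_ae_abs_le (hF ω)) (nonneg_of_ae_abs_le (hG _))
  calc _ ≤ F ω * G (shift^[n] ω) * opDist (Rcomp R n ω) (μ (shift^[n] ω)) :=
        abs_correlation_sub_decoupledCorrelation_le hf hg (hω n) (hF ω) (hG _)
    _ ≤ F ω * G (shift^[n] ω) * (K ω * ρ ^ ((n : ℝ) / p)) :=
        mul_le_mul_of_nonneg_left ((le_max_right _ _).trans (hKω n)) hFG
    _ = ρ ^ ((n : ℝ) / p) * (F ω * G (shift^[n] ω) * K ω) := by ring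
    _ ≤ _ := mul_le_mul_of_nonneg_left (le_abs_self _) (Real.rpow_nonneg hρ _)

theorem chain_coordinate_decorrelation_general
    (P : Measure (ℤ → 𝒴)) [IsProbabilityMeasure P] (herg : Ergodic shift P)
    (R : 𝒴 → Kernel X X) [∀ y, IsMarkovKernel (R y)]
    (hRmeas : ∀ Γ : Set X, MeasurableSet Γ →
      Measurable fun a : 𝒴 × X => R a.1 a.2 Γ)
    (μ : (ℤ → 𝒴) → Measure X) (hμprob : ∀ ω, IsProbabilityMeasure (μ ω))
    (hμmeas : ∀ Γ : Set X, MeasurableSet Γ → Measurable fun ω => μ ω Γ)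
    (hequi : Equivariant P R μ)
    (ρ : ℝ) (hρ : ρ ∈ Set.Ioo (0 : ℝ) 1) (hrates : EffectiveRates P R μ ρ)
    (f g : 𝒴 × X → ℝ) (hfmeas : Measurable f) (hgmeas : Measurable g)
    (q : ℝ) (hq : 2 < q)
    (F G : (ℤ → 𝒴) → ℝ)
    (hFess : ∀ ω, ∀ᵐ x ∂(μ ω), |f (ω 0, x)| ≤ F ω)
    (hGess : ∀ ω, ∀ᵐ x ∂(μ ω), |g (ω 0, x)| ≤ G ω)
    (hFq : MemLp F (ENNReal.ofReal q) P) (hGq : MemLp G (ENNReal.ofReal q) P) :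
    ∃ C : ℝ, 0 < C ∧ ∃ ρ1 : ℝ, ρ1 ∈ Set.Ioo (0 : ℝ) 1 ∧ ∀ n : ℕ,
      |(∫ ω, (∫ x, f (ω 0, x) *
            ∫ y, g (ω (n : ℤ), y) ∂((Rcomp R n ω) x) ∂(μ ω)) ∂P) -
          ∫ ω, (∫ x, f (ω 0, x) ∂(μ ω)) *
            ∫ x, g (ω (n : ℤ), x) ∂(μ (shift^[n] ω)) ∂P| ≤
        C * ρ1 ^ n * (eLpNorm F (ENNReal.ofReal q) P).toReal *
          (eLpNorm G (ENNReal.ofReal q) P).toReal := by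
  have := hμprob
  have hR : Measurable fun a : 𝒴 × X => R a.1 a.2 :=
    Measure.measurable_of_measurable_coe _ hRmeas
  have hμ : Measurable μ := Measure.measurable_of_measurable_coe _ hμmeas
  have hshift : MeasurePreserving shift P P := herg.toMeasurePreserving
  have hbind := hequi.ae_iterate_eq_bind hshift
  set p := q / (q - 2)
  have hp1 : 1 ≤ p := by rw [le_div_iff₀ (by linarith)]; linarith
  obtain ⟨K, hK, hKrate⟩ := hrates p hp1
  have := holderTriple_ofReal_half (by linarith : 0 < q)
  have := holderConjugate_ofReal_half hq
  refine ⟨(eLpNorm K (.ofReal p) P).toReal + 1, by positivity, ρ ^ p⁻¹,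
    ⟨Real.rpow_pos_of_pos hρ.1 _, Real.rpow_lt_one hρ.1.le hρ.2 (by positivity)⟩, fun n => ?_⟩
  have hbound := abs_integral_sub_integral_le_of_abs_sub_le (s := .ofReal (q / 2))
    (Real.rpow_nonneg hρ.1.le ((n : ℝ) / p))
    (stronglyMeasurable_correlation hR hμ hfmeas hgmeas n).aestronglyMeasurable
    (stronglyMeasurable_decoupledCorrelation hμ hfmeas hgmeas n).aestronglyMeasurable
    hFq (hGq.comp_measurePreserving (hshift.iterate n)) hK
    (hbind.mono fun ω hω => abs_correlation_le (hω n) (hFess ω) (hGess _))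
    (ae_of_all _ fun ω => abs_decoupledCorrelation_le (hFess ω) (hGess _))
    (hKrate.ae_abs_correlation_sub_decoupledCorrelation_le hρ.1.le hbind hfmeas hgmeas
      hFess hGess n)
  rw [eLpNorm_comp_measurePreserving hGq.1 (hshift.iterate n), div_eq_inv_mul,
    Real.rpow_mul_natCast hρ.1.le] at hbound
  have hρ1 : 0 ≤ (ρ ^ p⁻¹) ^ n := pow_nonneg (Real.rpow_nonneg hρ.1.le _) n
  calc _ ≤ _ := hbound
    _ ≤ (ρ ^ p⁻¹) ^ n * ((eLpNorm F (.ofReal q) P).toReal * (eLpNorm G (.ofReal q) P).toReal *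
          ((eLpNorm K (.ofReal p) P).toReal + 1)) := by gcongr; linarith
    _ = _ := by ring

/-- **Decorrelation of the chain coordinate**. Under `ψ_U(n) → 0`, the random Doeblin
condition and the effective rates for `(μ_ω)`, with envelopes `F, G ∈ L^q(ℙ)`
(`q > 2`) for `f, g`, there are `C > 0` and `ρ₁ ∈ (0,1)` such that for every `n`,
`|∫∫ f·(R_{ω,n} g) dμ_ω dℙ − ∫ μ_ω(f) μ_{θ^n ω}(g) dℙ| ≤ C ρ₁^n ‖F‖_{L^q} ‖G‖_{L^q}`. -/
theorem chain_coordinate_decorrelation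
    (P : Measure (ℤ → 𝒴)) [IsProbabilityMeasure P] (herg : Ergodic shift P)
    (hmix : Tendsto (psiU (𝒴 := 𝒴) P) atTop (nhds 0))
    (R : 𝒴 → Kernel X X) [∀ y, IsMarkovKernel (R y)]
    (hRmeas : ∀ Γ : Set X, MeasurableSet Γ →
      Measurable fun a : 𝒴 × X => R a.1 a.2 Γ)
    (nD : (ℤ → 𝒴) → ℕ) (γ : (ℤ → 𝒴) → ℝ) (m : (ℤ → 𝒴) → Measure X)
    (hnD : Measurable nD) (hγ : Measurable γ)
    (hγ01 : ∀ ω, γ ω ∈ Set.Ioo (0 : ℝ) 1)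
    (hmprob : ∀ ω, IsProbabilityMeasure (m ω))
    (hmmeas : ∀ Γ : Set X, MeasurableSet Γ → Measurable fun ω => m ω Γ)
    (hDoeb : Doeblin P R nD γ m)
    (μ : (ℤ → 𝒴) → Measure X) (hμprob : ∀ ω, IsProbabilityMeasure (μ ω))
    (hμmeas : ∀ Γ : Set X, MeasurableSet Γ → Measurable fun ω => μ ω Γ)
    (hequi : Equivariant P R μ)
    (ρ : ℝ) (hρ : ρ ∈ Set.Ioo (0 : ℝ) 1) (hrates : EffectiveRates P R μ ρ)
    (f g : 𝒴 × X → ℝ) (hfmeas : Measurable f) (hgmeas : Measurable g)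
    (q : ℝ) (hq : 2 < q)
    (F G : (ℤ → 𝒴) → ℝ)
    (hFess : ∀ ω, ∀ᵐ x ∂(μ ω), |f (ω 0, x)| ≤ F ω)
    (hGess : ∀ ω, ∀ᵐ x ∂(μ ω), |g (ω 0, x)| ≤ G ω)
    (hFq : MemLp F (ENNReal.ofReal q) P) (hGq : MemLp G (ENNReal.ofReal q) P) :
    ∃ C : ℝ, 0 < C ∧ ∃ ρ1 : ℝ, ρ1 ∈ Set.Ioo (0 : ℝ) 1 ∧ ∀ n : ℕ,
      |(∫ ω, (∫ x, f (ω 0, x) *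
            ∫ y, g (ω (n : ℤ), y) ∂((Rcomp R n ω) x) ∂(μ ω)) ∂P) -
          ∫ ω, (∫ x, f (ω 0, x) ∂(μ ω)) *
            ∫ x, g (ω (n : ℤ), x) ∂(μ (shift^[n] ω)) ∂P| ≤
        C * ρ1 ^ n * (eLpNorm F (ENNReal.ofReal q) P).toReal *
          (eLpNorm G (ENNReal.ofReal q) P).toReal :=
  chain_coordinate_decorrelation_general P herg R hRmeas μ hμprob hμmeas hequi ρ hρ hrates f g
    hfmeas hgmeas q hq F G hFess hGess hFq hGq

end
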